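/- arXiv:1608.04319 — 2 statements merged into one kernel-verified Lean document; each statement's English description precedes it below -/
import Mathlib

section
/- Let G be a finite simple graph with n vertices and m ≥ 1 edges. Then, as real numbers, NK(G^{--+}) ≤ (n-1)^n · ((m+3) - M1(G)/m)^m; moreover, equality holds if G is regular. -/
open Finset

variable {V : Type*}

/-- The Narumi–Katayama index: the product of the degrees of all vertices. -/
def NK {W : Type*} [Fintype W] (H : SimpleGraph W) [DecidableRel H.Adj] : ℕ :=
  ∏ v, H.degree v

/-- The first Zagreb index: the sum of the squares of the degrees. -/
def M1 [Fintype V] (G : SimpleGraph V) [DecidableRel G.Adj] : ℕ :=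
  ∑ v, (G.degree v) ^ 2

/-- The multiplicative sum Zagreb index: the product over the edges of `G` of the
sum of the degrees of the two endpoints. -/
def Pi1Star [Fintype V] [DecidableEq V] (G : SimpleGraph V) [DecidableRel G.Adj] : ℕ :=
  ∏ e ∈ G.edgeFinset,
    Sym2.lift ⟨fun u v => G.degree u + G.degree v, fun u v => by simp [Nat.add_comm]⟩ e

/-- A generic transformation graph on the vertex set `V(G) ∪ E(G)`, built from a
symmetric irreflexive relation `Rvv` between vertices, a symmetric irreflexive relation
`Ree` between edges, and an incidence relation `Rve` between vertices and edges. -/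
def transGraph (G : SimpleGraph V) (Rvv : V → V → Prop) (Ree : Sym2 V → Sym2 V → Prop)
    (Rve : V → Sym2 V → Prop)
    (hvv : Symmetric Rvv) (hvv' : Irreflexive Rvv)
    (hee : Symmetric Ree) (hee' : Irreflexive Ree) :
    SimpleGraph (V ⊕ G.edgeSet) where
  Adj a b :=
    match a, b with
    | Sum.inl u, Sum.inl v => Rvv u v
    | Sum.inr e, Sum.inr f => Ree e.1 f.1
    | Sum.inl u, Sum.inr e => Rve u e.1
    | Sum.inr e, Sum.inl u => Rve u e.1
  symm := by
    constructor
    rintro (u | e) (v | f) h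
    · exact hvv h
    · exact h
    · exact h
    · exact hee h
  loopless := by
    constructor
    rintro (u | e) h
    · exact hvv' u h
    · exact hee' e.1 h

instance transGraph.instDecidableAdj (G : SimpleGraph V) (Rvv : V → V → Prop)
    (Ree : Sym2 V → Sym2 V → Prop) (Rve : V → Sym2 V → Prop)
    (h1 : Symmetric Rvv) (h2 : Irreflexive Rvv) (h3 : Symmetric Ree) (h4 : Irreflexive Ree)
    [DecidableRel Rvv] [DecidableRel Ree] [∀ u e, Decidable (Rve u e)] :
    DecidableRel (transGraph G Rvv Ree Rve h1 h2 h3 h4).Adj := fun a b =>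
  match a, b with
  | Sum.inl u, Sum.inl v => inferInstanceAs (Decidable (Rvv u v))
  | Sum.inr e, Sum.inr f => inferInstanceAs (Decidable (Ree e.1 f.1))
  | Sum.inl u, Sum.inr e => inferInstanceAs (Decidable (Rve u e.1))
  | Sum.inr e, Sum.inl u => inferInstanceAs (Decidable (Rve u e.1))

/-- Two edges (as elements of `Sym2 V`) are adjacent: distinct and sharing an endpoint. -/
abbrev shareRel : Sym2 V → Sym2 V → Prop := fun e f => e ≠ f ∧ ∃ w, w ∈ e ∧ w ∈ f

lemma shareRel_symm : Symmetric (shareRel (V := V)) :=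
  fun _ _ h => ⟨h.1.symm, h.2.imp fun _ hw => ⟨hw.2, hw.1⟩⟩

lemma shareRel_irrefl : Irreflexive (shareRel (V := V)) := fun _ h => h.1 rfl

/-- Two edges are "non-adjacent": distinct and sharing no endpoint. -/
abbrev coshareRel : Sym2 V → Sym2 V → Prop := fun e f => e ≠ f ∧ ∀ w, w ∈ e → w ∉ f

lemma coshareRel_symm : Symmetric (coshareRel (V := V)) :=
  fun _ _ h => ⟨h.1.symm, fun w hf he => h.2 w he hf⟩

lemma coshareRel_irrefl : Irreflexive (coshareRel (V := V)) := fun _ h => h.1 rfl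

/-- Non-adjacency of distinct vertices. -/
abbrev coAdj (G : SimpleGraph V) : V → V → Prop := fun u v => u ≠ v ∧ ¬ G.Adj u v

lemma coAdj_symm (G : SimpleGraph V) : Symmetric (coAdj G) :=
  fun _ _ h => ⟨h.1.symm, fun ha => h.2 ha.symm⟩

lemma coAdj_irrefl (G : SimpleGraph V) : Irreflexive (coAdj G) := fun _ h => h.1 rfl

variable [Fintype V] [DecidableEq V]

/-- The total transformation graph `G^{--+}`. -/
abbrev Gmmp (G : SimpleGraph V) [DecidableRel G.Adj] : SimpleGraph (V ⊕ G.edgeSet) :=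
  transGraph G (coAdj G) coshareRel (fun u e => u ∈ e)
    (coAdj_symm G) (coAdj_irrefl G) coshareRel_symm coshareRel_irrefl

/-! In `G^{--+}` a vertex `u` of `G` is adjacent to the `n - 1 - d(u)` vertices it misses in `G` and
to its `d(u)` incident edges, so it has degree `n - 1`. An edge `uv` is adjacent to its two
endpoints and to the `m - (d(u) + d(v) - 1)` edges disjoint from it, so it has degree
`m + 3 - d(u) - d(v)`. These edge degrees sum to `m (m + 3) - M1(G)`, and AM–GM bounds their
product by the `m`-th power of their mean; in a regular graph they all coincide. -/

lemma Real.prod_le_sum_div_card_pow {ι : Type*} (s : Finset ι) {z : ι → ℝ}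
    (hz : ∀ i ∈ s, 0 ≤ z i) : ∏ i ∈ s, z i ≤ ((∑ i ∈ s, z i) / #s) ^ #s := by
  rcases s.eq_empty_or_nonempty with rfl | hs
  · simp
  have hcard : (0 : ℝ) < #s := by exact_mod_cast hs.card_pos
  have hAM := Real.geom_mean_le_arith_mean s (fun _ => 1) z (fun _ _ => zero_le_one)
    (by simpa using hcard) hz
  simp only [Real.rpow_one, one_mul, sum_const, nsmul_eq_mul, mul_one] at hAM
  calc ∏ i ∈ s, z i = ((∏ i ∈ s, z i) ^ (#s : ℝ)⁻¹) ^ #s := by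
        rw [← Real.rpow_natCast, ← Real.rpow_mul (prod_nonneg hz), inv_mul_cancel₀ hcard.ne',
          Real.rpow_one]
    _ ≤ ((∑ i ∈ s, z i) / #s) ^ #s := pow_le_pow_left₀ (Real.rpow_nonneg (prod_nonneg hz) _) hAM _

lemma Finset.prod_eq_sum_div_card_pow_of_forall_eq {ι K : Type*} [Semifield K] [CharZero K]
    (s : Finset ι) {z : ι → K} {c : K} (hz : ∀ i ∈ s, z i = c) :
    ∏ i ∈ s, z i = ((∑ i ∈ s, z i) / #s) ^ #s := by
  rcases s.eq_empty_or_nonempty with rfl | hs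
  · simp
  rw [prod_eq_pow_card hz, sum_eq_card_nsmul hz, nsmul_eq_mul,
    mul_div_cancel_left₀ _ (by exact_mod_cast hs.card_pos.ne')]

namespace SimpleGraph

lemma degree_eq_card_adj_inl_add_card_adj_inr {α β : Type*} [Fintype α] [Fintype β]
    (H : SimpleGraph (α ⊕ β)) [DecidableRel H.Adj] (x : α ⊕ β) :
    H.degree x = Fintype.card {a // H.Adj x (.inl a)} + Fintype.card {b // H.Adj x (.inr b)} := by
  rw [← card_neighborSet_eq_degree, ← Fintype.card_sum]
  exact Fintype.card_congr Equiv.subtypeSum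

lemma card_edgeSet_subtype {W : Type*} [Fintype W] (H : SimpleGraph W) [DecidableRel H.Adj]
    (P : Sym2 W → Prop) [DecidablePred P] :
    Fintype.card {e : H.edgeSet // P e} = #{e ∈ H.edgeFinset | P e} := by
  rw [Fintype.card_congr (Equiv.subtypeSubtypeEquivSubtypeInter _ P), Fintype.card_subtype]
  congr 1
  ext e
  simp

variable (G : SimpleGraph V) [DecidableRel G.Adj]

lemma card_edgeSet_mem (u : V) :
    Fintype.card {e : G.edgeSet // u ∈ (e : Sym2 V)} = G.degree u := by
  rw [card_edgeSet_subtype G (u ∈ ·), ← card_incidenceFinset_eq_degree]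
  congr 1
  ext e
  simp [incidenceSet, and_comm]

lemma card_filter_coshareRel_add_degree_add_degree {u v : V} (h : G.Adj u v) :
    #{f ∈ G.edgeFinset | coshareRel s(u, v) f} + (G.degree u + G.degree v)
      = #G.edgeFinset + 1 := by
  have hfilter : {f ∈ G.edgeFinset | coshareRel s(u, v) f}
      = G.edgeFinset \ (G.incidenceFinset u ∪ G.incidenceFinset v) := by
    ext f
    simp only [mem_filter, coshareRel, mem_sdiff, mem_union, mem_incidenceFinset, mem_edgeFinset,
      incidenceSet, Set.mem_ofPred_eq, Sym2.mem_iff, forall_eq_or_imp, forall_eq, not_or]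
    constructor
    · rintro ⟨hf, -, hu, hv⟩
      exact ⟨hf, fun h' => hu h'.2, fun h' => hv h'.2⟩
    · rintro ⟨hf, hu, hv⟩
      exact ⟨hf, fun heq => hu ⟨hf, heq ▸ Sym2.mem_mk_left u v⟩, fun h' => hu ⟨hf, h'⟩,
        fun h' => hv ⟨hf, h'⟩⟩
  have hsub : G.incidenceFinset u ∪ G.incidenceFinset v ⊆ G.edgeFinset := by
    intro f hf
    simp only [mem_union, mem_incidenceFinset, incidenceSet, Set.mem_ofPred_eq] at hf
    rw [mem_edgeFinset]
    rcases hf with hf | hf <;> exact hf.1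
  have hinter : G.incidenceFinset u ∩ G.incidenceFinset v = {s(u, v)} := by
    rw [incidenceFinset, incidenceFinset, ← Set.toFinset_inter,
      Set.toFinset_congr (G.incidenceSet_inter_incidenceSet_of_adj h), Set.toFinset_singleton]
  have hunion := card_union_add_card_inter (G.incidenceFinset u) (G.incidenceFinset v)
  rw [hinter, card_singleton, card_incidenceFinset_eq_degree,
    card_incidenceFinset_eq_degree] at hunion
  rw [hfilter, card_sdiff_of_subset hsub]
  have := card_le_card hsub
  omega

lemma sum_edgeFinset_sum_toFinset {M : Type*} [AddCommMonoid M] (f : V → M) :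
    ∑ e ∈ G.edgeFinset, ∑ w ∈ e.toFinset, f w = ∑ w, G.degree w • f w := by
  rw [sum_comm' (t' := univ) (s' := fun w => G.incidenceFinset w)
    (by simp [incidenceSet, Sym2.mem_toFinset, and_comm])]
  simp [card_incidenceFinset_eq_degree]

lemma degree_Gmmp_inl (u : V) : (Gmmp G).degree (.inl u) = Fintype.card V - 1 := by
  have hcompl : Fintype.card {v // (Gmmp G).Adj (.inl u) (.inl v)} = Gᶜ.degree u := by
    rw [← card_neighborSet_eq_degree]
    exact Fintype.card_congr (Equiv.refl _)
  have hincident : Fintype.card {e : G.edgeSet // (Gmmp G).Adj (.inl u) (.inr e)} = G.degree u :=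
    card_edgeSet_mem G u
  rw [degree_eq_card_adj_inl_add_card_adj_inr, hcompl, hincident, degree_compl]
  have := G.degree_lt_card_verts u
  omega

lemma degree_Gmmp_inr_add_sum_degree (e : G.edgeSet) :
    (Gmmp G).degree (.inr e) + ∑ w ∈ (e : Sym2 V).toFinset, G.degree w = #G.edgeFinset + 3 := by
  obtain ⟨e, he⟩ := e
  induction e using Sym2.inductionOn with | hf u v => ?_
  have hadj : G.Adj u v := G.mem_edgeSet.mp he
  have hendpoints : Fintype.card {w // (Gmmp G).Adj (.inr ⟨s(u, v), he⟩) (.inl w)} = 2 := by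
    rw [Fintype.card_subtype, ← card_pair hadj.ne]
    congr 1
    ext w
    simp only [mem_filter, mem_univ, true_and, mem_insert, mem_singleton]
    exact Sym2.mem_iff
  have hdisjoint : Fintype.card {f : G.edgeSet // (Gmmp G).Adj (.inr ⟨s(u, v), he⟩) (.inr f)}
      = #{f ∈ G.edgeFinset | coshareRel s(u, v) f} :=
    card_edgeSet_subtype G (coshareRel s(u, v))
  rw [degree_eq_card_adj_inl_add_card_adj_inr, hendpoints, hdisjoint, Sym2.toFinset_mk_eq,
    sum_pair hadj.ne]
  have := card_filter_coshareRel_add_degree_add_degree G hadj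
  omega

lemma degree_Gmmp_inr_of_isRegularOfDegree {r : ℕ} (hG : G.IsRegularOfDegree r)
    (e : G.edgeSet) : (Gmmp G).degree (.inr e) = #G.edgeFinset + 3 - 2 * r := by
  have h := degree_Gmmp_inr_add_sum_degree G e
  rw [sum_congr rfl fun w _ => hG w, sum_const,
    Sym2.card_toFinset_of_not_isDiag _ (G.not_isDiag_of_mem_edgeSet e.2), smul_eq_mul] at h
  omega

lemma sum_degree_Gmmp_inr_add_M1 :
    ∑ e : G.edgeSet, (Gmmp G).degree (.inr e) + M1 G = #G.edgeFinset * (#G.edgeFinset + 3) := by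
  have hM1 : M1 G = ∑ e : G.edgeSet, ∑ w ∈ (e : Sym2 V).toFinset, G.degree w :=
    calc M1 G = ∑ w, G.degree w • G.degree w := by simp only [M1, sq, smul_eq_mul]
      _ = ∑ e ∈ G.edgeFinset, ∑ w ∈ e.toFinset, G.degree w :=
        (sum_edgeFinset_sum_toFinset G _).symm
      _ = ∑ e : G.edgeSet, ∑ w ∈ (e : Sym2 V).toFinset, G.degree w :=
        sum_subtype G.edgeFinset (fun _ => mem_edgeFinset) _
  rw [hM1, ← sum_add_distrib, sum_congr rfl fun e _ => degree_Gmmp_inr_add_sum_degree G e,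
    sum_const, card_univ, ← edgeFinset_card, smul_eq_mul]

lemma NK_Gmmp_eq : NK (Gmmp G) =
    (Fintype.card V - 1) ^ Fintype.card V * ∏ e : G.edgeSet, (Gmmp G).degree (.inr e) := by
  rw [NK, Fintype.prod_sum_type]
  simp only [degree_Gmmp_inl, prod_const, card_univ]

end SimpleGraph

open SimpleGraph in
theorem stmt_11 (G : SimpleGraph V) [DecidableRel G.Adj]
    (hm : 1 ≤ G.edgeFinset.card) :
    (NK (Gmmp G) : ℝ) ≤ ((Fintype.card V : ℝ) - 1) ^ Fintype.card V * (((G.edgeFinset.card : ℝ) + 3) - (M1 G : ℝ) / G.edgeFinset.card) ^ G.edgeFinset.card ∧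
      ((∃ r, G.IsRegularOfDegree r) → (NK (Gmmp G) : ℝ) = ((Fintype.card V : ℝ) - 1) ^ Fintype.card V * (((G.edgeFinset.card : ℝ) + 3) - (M1 G : ℝ) / G.edgeFinset.card) ^ G.edgeFinset.card) := by
  obtain ⟨uv, -⟩ := card_pos.mp hm
  have hn : 1 ≤ Fintype.card V := Fintype.card_pos_iff.mpr ⟨uv.out.1⟩
  have hNK : (NK (Gmmp G) : ℝ) = ((Fintype.card V : ℝ) - 1) ^ Fintype.card V *
      ∏ e : G.edgeSet, ((Gmmp G).degree (.inr e) : ℝ) := by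
    rw [NK_Gmmp_eq, Nat.cast_mul, Nat.cast_pow, Nat.cast_sub hn, Nat.cast_one, Nat.cast_prod]
  have hcard : #(univ : Finset G.edgeSet) = #G.edgeFinset := by rw [card_univ, edgeFinset_card]
  have hmean : (∑ e : G.edgeSet, ((Gmmp G).degree (.inr e) : ℝ)) / #(univ : Finset G.edgeSet)
      = (#G.edgeFinset + 3) - M1 G / #G.edgeFinset := by
    have hm' : (#G.edgeFinset : ℝ) ≠ 0 := by positivity
    rw [hcard, eq_sub_iff_add_eq, ← add_div, div_eq_iff hm']
    exact_mod_cast (sum_degree_Gmmp_inr_add_M1 G).trans (mul_comm _ _)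
  have hcoeff : 0 ≤ ((Fintype.card V : ℝ) - 1) ^ Fintype.card V :=
    pow_nonneg (sub_nonneg.mpr (by exact_mod_cast hn)) _
  rw [hNK, ← hmean, ← hcard]
  refine ⟨mul_le_mul_of_nonneg_left (Real.prod_le_sum_div_card_pow _ fun _ _ => Nat.cast_nonneg _)
    hcoeff, ?_⟩
  rintro ⟨r, hr⟩
  rw [prod_eq_sum_div_card_pow_of_forall_eq _ fun e _ =>
    congrArg Nat.cast (degree_Gmmp_inr_of_isRegularOfDegree G hr e)]
end

section
/- Let G be an r-regular finite simple graph with n vertices and m edges. Then, as real numbers, NK(G^{-+-}) = (m+n-2r-1)^n · (n+2r-4)^m. -/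
open Finset

variable {V : Type*}

variable [Fintype V] [DecidableEq V]

/-- The total transformation graph `G^{-+-}`. -/
abbrev Gmpm (G : SimpleGraph V) [DecidableRel G.Adj] : SimpleGraph (V ⊕ G.edgeSet) :=
  transGraph G (coAdj G) shareRel (fun u e => u ∉ e)
    (coAdj_symm G) (coAdj_irrefl G) shareRel_symm shareRel_irrefl

/-!
A vertex `u` of `G` is adjacent in `G^{-+-}` to its `n - 1 - deg u` non-neighbours and to the
`m - deg u` edges avoiding it; an edge `ab` is adjacent to the `n - 2` vertices off it and to the
`deg a + deg b - 2` other edges meeting it, since the edges at `a` and at `b` overlap only in `ab`.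
For `r`-regular `G` these degrees are the constants `m + n - 2r - 1` and `n + 2r - 4`.
-/

section transGraph

variable (G : SimpleGraph V) {Rvv : V → V → Prop} {Ree : Sym2 V → Sym2 V → Prop}
  {Rve : V → Sym2 V → Prop} (h1 : Symmetric Rvv) (h2 : Irreflexive Rvv) (h3 : Symmetric Ree)
  (h4 : Irreflexive Ree) [DecidableRel Rvv] [DecidableRel Ree] [∀ u e, Decidable (Rve u e)]
  [DecidableRel G.Adj]

omit [DecidableEq V] in
lemma transGraph_degree_inl (u : V) :
    (transGraph G Rvv Ree Rve h1 h2 h3 h4).degree (Sum.inl u) =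
      #{v | Rvv u v} + #{e : G.edgeSet | Rve u e.1} := by
  rw [← SimpleGraph.card_neighborFinset_eq_degree, SimpleGraph.neighborFinset_eq_filter,
    card_filter, Fintype.sum_sum_type, card_filter, card_filter]
  rfl

omit [DecidableEq V] in
lemma transGraph_degree_inr (e : G.edgeSet) :
    (transGraph G Rvv Ree Rve h1 h2 h3 h4).degree (Sum.inr e) =
      #{v | Rve v e.1} + #{f : G.edgeSet | Ree e.1 f.1} := by
  rw [← SimpleGraph.card_neighborFinset_eq_degree, SimpleGraph.neighborFinset_eq_filter,
    card_filter, Fintype.sum_sum_type, card_filter, card_filter]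
  rfl

end transGraph

namespace SimpleGraph

variable (G : SimpleGraph V) [DecidableRel G.Adj]

omit [DecidableEq V] in
lemma card_filter_edgeSet (p : Sym2 V → Prop) [DecidablePred p] :
    #{e : G.edgeSet | p e.1} = #{e ∈ G.edgeFinset | p e} := by
  rw [← card_map (Function.Embedding.subtype _)]
  congr 1
  ext e
  simp [and_comm]

lemma card_filter_not_mem_edgeSet_add_degree (u : V) :
    #{e : G.edgeSet | u ∉ e.1} + G.degree u = #G.edgeFinset := by
  rw [card_filter_edgeSet G (u ∉ ·), ← card_incidenceFinset_eq_degree,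
    incidenceFinset_eq_filter, add_comm]
  exact card_filter_add_card_filter_not _

lemma card_filter_share_add_two {a b : V} (h : G.Adj a b) :
    #{f : G.edgeSet | shareRel s(a, b) f.1} + 2 = G.degree a + G.degree b := by
  have hshare : ({f ∈ G.edgeFinset | shareRel s(a, b) f} : Finset _) =
      (G.incidenceFinset a ∪ G.incidenceFinset b).erase s(a, b) := by
    ext f
    simp only [mem_filter, mem_erase, mem_union, mem_incidenceFinset, incidenceSet, shareRel,
      Sym2.mem_iff, exists_eq_or_imp, exists_eq_left, Set.mem_setOf_eq, mem_edgeFinset]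
    tauto
  have hinter : G.incidenceFinset a ∩ G.incidenceFinset b = {s(a, b)} := by
    rw [← coe_inj, coe_inter, coe_incidenceFinset, coe_incidenceFinset, coe_singleton,
      G.incidenceSet_inter_incidenceSet_of_adj h]
  have hmem : s(a, b) ∈ G.incidenceFinset a ∪ G.incidenceFinset b := by
    simp [incidenceFinset_eq_filter, h]
  rw [card_filter_edgeSet G (shareRel s(a, b)), hshare, card_erase_of_mem hmem,
    ← card_incidenceFinset_eq_degree, ← card_incidenceFinset_eq_degree,
    ← card_union_add_card_inter, hinter, card_singleton]
  have := card_pos.2 ⟨_, hmem⟩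
  omega

lemma Gmpm_degree_inl_add (u : V) :
    (Gmpm G).degree (Sum.inl u) + (2 * G.degree u + 1) = Fintype.card V + #G.edgeFinset := by
  have hcompl : #{v | coAdj G u v} = Gᶜ.degree u := by
    rw [← card_neighborFinset_eq_degree, neighborFinset_eq_filter]
    rfl
  have hlt := G.degree_lt_card_verts u
  have hedges := G.card_filter_not_mem_edgeSet_add_degree u
  rw [transGraph_degree_inl, hcompl, degree_compl]
  omega

lemma Gmpm_degree_inr_add {a b : V} (h : s(a, b) ∈ G.edgeSet) :
    (Gmpm G).degree (Sum.inr ⟨s(a, b), h⟩) + 4 = Fintype.card V + G.degree a + G.degree b := by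
  have hends : #{v | v ∈ s(a, b)} = 2 := by
    rw [← card_pair (G.mem_edgeSet.1 h).ne]
    congr 1
    ext
    simp
  have hoff := card_filter_add_card_filter_not (s := univ) (· ∈ s(a, b))
  have hshare := G.card_filter_share_add_two (G.mem_edgeSet.1 h)
  rw [card_univ] at hoff
  rw [transGraph_degree_inr]
  dsimp only
  omega

end SimpleGraph

theorem stmt_19 (G : SimpleGraph V) [DecidableRel G.Adj]
    (r : ℕ)
    (hreg : G.IsRegularOfDegree r) :
    (NK (Gmpm G) : ℝ) = ((G.edgeFinset.card : ℝ) + Fintype.card V - 2 * r - 1) ^ Fintype.card V * ((Fintype.card V : ℝ) + 2 * r - 4) ^ G.edgeFinset.card := by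
  have hvert (u : V) : ((Gmpm G).degree (Sum.inl u) : ℝ) =
      #G.edgeFinset + Fintype.card V - 2 * r - 1 := by
    have h : ((Gmpm G).degree (Sum.inl u) : ℝ) + (2 * r + 1) =
        Fintype.card V + #G.edgeFinset := by
      exact_mod_cast hreg u ▸ G.Gmpm_degree_inl_add u
    linarith
  have hedge (e : G.edgeSet) :
      ((Gmpm G).degree (Sum.inr e) : ℝ) = Fintype.card V + 2 * r - 4 := by
    obtain ⟨e, he⟩ := e
    induction e using Sym2.ind with
    | _ a b =>
    have h : ((Gmpm G).degree (Sum.inr ⟨s(a, b), he⟩) : ℝ) + 4 = Fintype.card V + r + r := by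
      exact_mod_cast hreg a ▸ hreg b ▸ G.Gmpm_degree_inr_add he
    linarith
  rw [NK, Nat.cast_prod, Fintype.prod_sum_type]
  simp only [hvert, hedge, prod_const, card_univ, SimpleGraph.edgeFinset_card]
end
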